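/- Let a, b be positive elements of a C*-algebra with a Cuntz subequivalent to b. Then for every ε > 0 there exist δ > 0 and an element x such that (a−ε)₊ = x* (b−δ)₊ x. -/

import Mathlib

/-!
Pick `r` with `r⋆ b r` close to `a`, then `δ > 0` so small that still `‖a - r⋆ (b - δ)₊ r‖ < ε`.
In the unitization this gives `a - κ ≤ r⋆ (b - δ)₊ r` for some `κ < ε`, and conjugating by `g(a)`,
where `g(t)² (t - κ) = (t - ε)₊`, yields `(a - ε)₊ ≤ z⋆z` for `z = (b - δ)₊^(1/2) r g(a)`.
Every `0 ≤ d ≤ z⋆z` is `v⋆v` for some `v` in the closed right ideal generated by `z`: take the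
limit of `z (z⋆z + c)^(-1/2) d^(1/2)` as `c → 0`. Finally, for a suitable `k` the element
`(b - δ/2)₊^(1/2) k` is a left unit for `(b - δ)₊^(1/2)`, hence for `v`, so that
`v⋆v = w⋆ (b - δ/2)₊ w` with `w = k v`, and `w` lies in `A` because `v` does.
-/

open Filter

/-- The positive part `(a − ε)₊` of a positive element, via functional calculus. -/
noncomputable def cutDown {A : Type*} [NonUnitalCStarAlgebra A] [PartialOrder A]
    [StarOrderedRing A] (a : A) (ε : ℝ) : A :=
  cfcₙ (fun t : ℝ => max (t - ε) 0) a

open Set Topology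

lemma sq_mul_inv_sqrt_add_sub_inv_sqrt_add_sq_le {t c c' : ℝ} (ht : 0 ≤ t) (hc' : 0 < c')
    (hc'c : c' ≤ c) : t ^ 2 * ((√(t + c'))⁻¹ - (√(t + c))⁻¹) ^ 2 ≤ c := by
  set u := √(t + c')
  set w := √(t + c)
  have hu : 0 < u := Real.sqrt_pos.2 (by linarith)
  have huw : u ≤ w := Real.sqrt_le_sqrt (by linarith)
  have hw : 0 < w := hu.trans_le huw
  have hu2 : u ^ 2 = t + c' := Real.sq_sqrt (by linarith)
  have hw2 : w ^ 2 = t + c := Real.sq_sqrt (by linarith)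
  have hdiff : t * (u⁻¹ - w⁻¹) ≤ w - u := by
    have htuw : t ≤ u * w := by nlinarith
    have : u⁻¹ - w⁻¹ = (w - u) / (u * w) := by field_simp
    rw [this, mul_div_assoc']
    exact div_le_of_le_mul₀ (by positivity) (by linarith) (by nlinarith)
  have hnonneg : 0 ≤ t * (u⁻¹ - w⁻¹) := mul_nonneg ht (sub_nonneg.2 (inv_anti₀ hu huw))
  calc t ^ 2 * (u⁻¹ - w⁻¹) ^ 2 = (t * (u⁻¹ - w⁻¹)) ^ 2 := by ring
    _ ≤ (w - u) ^ 2 := pow_le_pow_left₀ hnonneg hdiff 2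
    _ ≤ c := by nlinarith

lemma sqrt_cut_div_mul_sub_mul_sqrt_cut_div {κ ε : ℝ} (hκε : κ < ε) (t : ℝ) :
    √(max (t - ε) 0 / max (t - κ) (ε - κ)) * (t - κ) * √(max (t - ε) 0 / max (t - κ) (ε - κ))
      = max (t - ε) 0 := by
  have hden : 0 < max (t - κ) (ε - κ) := lt_max_of_lt_right (by linarith)
  rw [mul_right_comm, Real.mul_self_sqrt (div_nonneg (le_max_right _ _) hden.le)]
  rcases le_total t ε with h | h
  · simp [max_eq_right (sub_nonpos.2 h)]
  · rw [max_eq_left (by linarith : ε - κ ≤ t - κ), div_mul_cancel₀ _ (by linarith)]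

lemma sqrt_cut_mul_inv_mul_sqrt_cut {δ' δ : ℝ} (hδ' : δ' < δ) (t : ℝ) :
    √(max (t - δ') 0) * (√(max (t - δ') (δ - δ')))⁻¹ * √(max (t - δ) 0) = √(max (t - δ) 0) := by
  rcases le_total t δ with h | h
  · simp [max_eq_right (sub_nonpos.2 h)]
  · rw [max_eq_left (by linarith : δ - δ' ≤ t - δ'), max_eq_left (by linarith : (0:ℝ) ≤ t - δ'),
      mul_inv_cancel₀ (Real.sqrt_pos.2 (by linarith)).ne', one_mul]

lemma continuous_inv_sqrt_max_add {c : ℝ} (hc : 0 < c) :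
    Continuous fun t : ℝ => (√(max t 0 + c))⁻¹ :=
  Continuous.inv₀ (by fun_prop) fun t =>
    (Real.sqrt_pos.2 (add_pos_of_nonneg_of_pos (le_max_right t 0) hc)).ne'

lemma mul_eq_self_of_mem_closure_range_mul {R : Type*} [Semigroup R] [TopologicalSpace R]
    [ContinuousMul R] [T2Space R] {e s v : R} (hes : e * s = s)
    (hv : v ∈ closure (range (s * ·))) : e * v = v := by
  refine closure_minimal ?_ (isClosed_eq (continuous_const.mul continuous_id) continuous_id) hv
  rintro _ ⟨y, rfl⟩
  exact (mul_assoc e s y).symm.trans (congrArg (· * y) hes)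

lemma Unitization.fst_eq_zero_of_mem_closure_range_mul {𝕜 A : Type*} [NontriviallyNormedField 𝕜]
    [NonUnitalNormedRing A] [NormedSpace 𝕜 A] [IsScalarTower 𝕜 A A] [SMulCommClass 𝕜 A A]
    {s v : Unitization 𝕜 A} (hs : s.fst = 0) (hv : v ∈ closure (range (s * ·))) :
    v.fst = 0 := by
  refine closure_minimal ?_ (isClosed_eq Unitization.continuous_fst continuous_const) hv
  rintro _ ⟨y, rfl⟩
  show (s * y).fst = 0
  rw [Unitization.fst_mul, hs, zero_mul]

section Unital

variable {W : Type*} [CStarAlgebra W]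

lemma cfc_mul_self_mul_cfc {c : W} (hc : IsSelfAdjoint c) {f g : ℝ → ℝ}
    (hf : ContinuousOn f (spectrum ℝ c)) (hg : ContinuousOn g (spectrum ℝ c)) :
    cfc f c * c * cfc g c = cfc (fun t => f t * t * g t) c := by
  conv_lhs => enter [1, 2]; rw [← cfc_id' ℝ c]
  rw [← cfc_mul .., ← cfc_mul ..]

lemma star_cfc_sqrt_cut_mul_self (b : W) (δ : ℝ) :
    star (cfc (fun t => √(max (t - δ) 0)) b) * cfc (fun t => √(max (t - δ) 0)) b
      = cfc (fun t => max (t - δ) 0) b := by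
  rw [(cfc_predicate _ b : IsSelfAdjoint _).star_eq, ← cfc_mul ..]
  exact cfc_congr fun t _ => Real.mul_self_sqrt (le_max_right _ _)

lemma exists_cfc_sqrt_cut_mul_mul_eq (b : W) {δ δ' : ℝ} (hδ' : δ' < δ) :
    ∃ k : W, cfc (fun t => √(max (t - δ') 0)) b * k * cfc (fun t => √(max (t - δ) 0)) b
      = cfc (fun t => √(max (t - δ) 0)) b := by
  set k : ℝ → ℝ := fun t => (√(max (t - δ') (δ - δ')))⁻¹
  have hk : Continuous k := Continuous.inv₀ (by fun_prop) fun t =>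
    (Real.sqrt_pos.2 (lt_max_of_lt_right (sub_pos.2 hδ'))).ne'
  refine ⟨cfc k b, ?_⟩
  rw [← cfc_mul .., ← cfc_mul ..]
  exact cfc_congr fun t _ => sqrt_cut_mul_inv_mul_sqrt_cut hδ' t

/-- `z (z⋆z + c)^(-1/2) q`; the `max` is invisible on the spectrum of `z⋆z`. -/
noncomputable def polarApprox (z q : W) (c : ℝ) : W :=
  z * cfc (fun t => (√(max t 0 + c))⁻¹) (star z * z) * q

variable [PartialOrder W] [StarOrderedRing W]

lemma norm_star_mul_cfc_mul_le {c q : W} (hc : 0 ≤ c) (hqc : q * star q ≤ c) {F : ℝ → ℝ}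
    (hF : ContinuousOn F (spectrum ℝ c)) (hF₀ : ∀ t ∈ spectrum ℝ c, 0 ≤ F t) {C : ℝ}
    (hC : 0 ≤ C) (hFC : ∀ t ∈ spectrum ℝ c, t * F t ≤ C) : ‖star q * cfc F c * q‖ ≤ C := by
  set e := cfc (fun t => √(F t)) c
  have he : IsSelfAdjoint e := cfc_predicate _ _
  have hee : cfc F c = e * e := by
    rw [← cfc_mul ..]
    exact cfc_congr fun t ht => (Real.mul_self_sqrt (hF₀ t ht)).symm
  have hece : e * c * e = cfc (fun t => t * F t) c := by
    rw [cfc_mul_self_mul_cfc hc.isSelfAdjoint hF.sqrt hF.sqrt]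
    exact cfc_congr fun t ht => by rw [mul_right_comm, Real.mul_self_sqrt (hF₀ t ht), mul_comm]
  calc ‖star q * cfc F c * q‖ = ‖e * (q * star q) * e‖ := by
        have h₁ : star q * (e * e) * q = star (e * q) * (e * q) := by
          simp only [star_mul, he.star_eq, mul_assoc]
        have h₂ : e * (q * star q) * e = e * q * star (e * q) := by
          simp only [star_mul, he.star_eq, mul_assoc]
        rw [hee, h₁, h₂, CStarRing.norm_star_mul_self, CStarRing.norm_self_mul_star]
    _ ≤ ‖e * c * e‖ := by
        refine CStarAlgebra.norm_le_norm_of_nonneg_of_le ?_ ?_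
        · simpa [he.star_eq] using star_left_conjugate_nonneg (mul_star_self_nonneg q) e
        · simpa [he.star_eq] using star_left_conjugate_le_conjugate hqc e
    _ ≤ C := by
        rw [hece]
        refine norm_cfc_le hC fun t ht => ?_
        rw [Real.norm_of_nonneg (mul_nonneg (spectrum_nonneg_of_nonneg hc ht) (hF₀ t ht))]
        exact hFC t ht

lemma star_mul_cfc_mul_mul_self (z q : W) {f : ℝ → ℝ}
    (hf : ContinuousOn f (spectrum ℝ (star z * z))) :
    star (z * cfc f (star z * z) * q) * (z * cfc f (star z * z) * q)
      = star q * cfc (fun t => f t * t * f t) (star z * z) * q := by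
  have he : IsSelfAdjoint (cfc f (star z * z)) := cfc_predicate _ _
  rw [← cfc_mul_self_mul_cfc (star_mul_self_nonneg z).isSelfAdjoint hf hf]
  simp only [star_mul, he.star_eq, mul_assoc]

lemma norm_star_mul_self_sub_star_polarApprox_mul_self_le {z q : W}
    (hqz : q * star q ≤ star z * z) {c : ℝ} (hc : 0 < c) :
    ‖star q * q - star (polarApprox z q c) * polarApprox z q c‖ ≤ c := by
  set g : ℝ → ℝ := fun t => (√(max t 0 + c))⁻¹
  have hg : Continuous g := continuous_inv_sqrt_max_add hc
  have hsub : star q * q - star (polarApprox z q c) * polarApprox z q c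
      = star q * cfc (fun t => 1 - g t * t * g t) (star z * z) * q := by
    rw [polarApprox, star_mul_cfc_mul_mul_self z q hg.continuousOn, cfc_sub .., cfc_const_one ..]
    noncomm_ring
  have hgtg : ∀ t ∈ spectrum ℝ (star z * z), g t * t * g t = t / (t + c) := fun t ht => by
    have ht₀ : 0 ≤ t := spectrum_nonneg_of_nonneg (star_mul_self_nonneg z) ht
    simp only [g, max_eq_left ht₀]
    rw [mul_right_comm, ← mul_inv, Real.mul_self_sqrt (by positivity), inv_mul_eq_div]
  rw [hsub]
  refine norm_star_mul_cfc_mul_le (star_mul_self_nonneg z) hqz (by fun_prop) (fun t ht => ?_)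
    hc.le (fun t ht => ?_)
  all_goals
    have ht₀ : 0 ≤ t := spectrum_nonneg_of_nonneg (star_mul_self_nonneg z) ht
    rw [hgtg t ht, one_sub_div (by positivity), add_sub_cancel_left]
  · positivity
  · rw [mul_div_assoc', div_le_iff₀ (by positivity)]
    nlinarith

lemma norm_polarApprox_sub_sq_le {z q : W} (hqz : q * star q ≤ star z * z) {c c' : ℝ}
    (hc' : 0 < c') (hc'c : c' ≤ c) : ‖polarApprox z q c' - polarApprox z q c‖ ^ 2 ≤ c := by
  set h : ℝ → ℝ := fun t => (√(max t 0 + c'))⁻¹ - (√(max t 0 + c))⁻¹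
  have hg' := continuous_inv_sqrt_max_add hc'
  have hg := continuous_inv_sqrt_max_add (hc'.trans_le hc'c)
  have hsub : polarApprox z q c' - polarApprox z q c = z * cfc h (star z * z) * q := by
    rw [polarApprox, polarApprox, cfc_sub _ _ _ hg'.continuousOn hg.continuousOn]
    noncomm_ring
  rw [sq, ← CStarRing.norm_star_mul_self, hsub,
    star_mul_cfc_mul_mul_self z q (f := h) (hg'.sub hg).continuousOn]
  refine norm_star_mul_cfc_mul_le (star_mul_self_nonneg z) hqz (by fun_prop) (fun t ht => ?_)
    (hc'.le.trans hc'c) (fun t ht => ?_)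
  all_goals
    have ht₀ : 0 ≤ t := spectrum_nonneg_of_nonneg (star_mul_self_nonneg z) ht
  · rw [mul_right_comm]
    exact mul_nonneg (mul_self_nonneg _) ht₀
  · calc t * (h t * t * h t)
        = t ^ 2 * ((√(t + c'))⁻¹ - (√(t + c))⁻¹) ^ 2 := by simp only [h, max_eq_left ht₀]; ring
      _ ≤ c := sq_mul_inv_sqrt_add_sub_inv_sqrt_add_sq_le ht₀ hc' hc'c

lemma exists_mem_closure_range_mul_star_mul_self_eq {z d : W} (hd : 0 ≤ d)
    (hdz : d ≤ star z * z) : ∃ v ∈ closure (range (z * ·)), star v * v = d := by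
  set q := CFC.sqrt d
  have hq : star q = q := (CFC.sqrt_nonneg d).isSelfAdjoint.star_eq
  have hqq : q * q = d := CFC.sqrt_mul_sqrt_self d hd
  have hqz : q * star q ≤ star z * z := by rwa [hq, hqq]
  set c : ℕ → ℝ := fun n => 1 / (n + 1)
  have hc : ∀ n, 0 < c n := fun n => by positivity
  have hc₀ : Tendsto c atTop (𝓝 0) := tendsto_one_div_add_atTop_nhds_zero_nat
  set u : ℕ → W := fun n => polarApprox z q (c n)
  have hu : CauchySeq u := by
    refine cauchySeq_of_le_tendsto_0' (fun n => √(c n)) (fun n m hnm => ?_)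
      (by simpa using hc₀.sqrt)
    rw [dist_comm, dist_eq_norm, Real.le_sqrt (norm_nonneg _) (hc n).le]
    exact norm_polarApprox_sub_sq_le hqz (hc m)
      (one_div_le_one_div_of_le (by positivity) (by gcongr))
  obtain ⟨v, hv⟩ := cauchySeq_tendsto_of_complete hu
  refine ⟨v, mem_closure_of_tendsto hv (Eventually.of_forall fun n => ⟨_, (mul_assoc ..).symm⟩), ?_⟩
  have hu_sq : Tendsto (fun n => star (u n) * u n) atTop (𝓝 d) := by
    refine tendsto_iff_norm_sub_tendsto_zero.2 (squeeze_zero_norm (fun n => ?_) hc₀)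
    rw [norm_norm, norm_sub_rev, ← hqq]
    nth_rewrite 1 [← hq]
    exact norm_star_mul_self_sub_star_polarApprox_mul_self_le hqz (hc n)
  exact tendsto_nhds_unique (hv.star.mul hv) hu_sq

lemma sub_algebraMap_norm_sub_le {a c : W} (ha : IsSelfAdjoint a) (hc : IsSelfAdjoint c) :
    a - algebraMap ℝ W ‖a - c‖ ≤ c :=
  sub_le_comm.1 (ha.sub hc).le_algebraMap_norm_self

lemma exists_cfc_cut_le_star_mul_mul_of_norm_sub_lt {a c : W} (ha : IsSelfAdjoint a)
    (hc : IsSelfAdjoint c) {ε : ℝ} (hac : ‖a - c‖ < ε) :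
    ∃ g : W, cfc (fun t => max (t - ε) 0) a ≤ star g * c * g := by
  set κ := ‖a - c‖
  set f : ℝ → ℝ := fun t => √(max (t - ε) 0 / max (t - κ) (ε - κ))
  have hf : Continuous f :=
    Continuous.sqrt (Continuous.div (by fun_prop) (by fun_prop)
      fun t => (lt_max_of_lt_right (sub_pos.2 hac)).ne')
  have hg : IsSelfAdjoint (cfc f a) := cfc_predicate _ _
  refine ⟨cfc f a, ?_⟩
  calc cfc (fun t => max (t - ε) 0) a = cfc (fun t => f t * (t - κ) * f t) a :=
        cfc_congr fun t _ => (sqrt_cut_div_mul_sub_mul_sqrt_cut_div hac t).symm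
    _ = star (cfc f a) * (a - algebraMap ℝ W κ) * cfc f a := by
        rw [cfc_mul .., cfc_mul .., cfc_sub .., cfc_id' .., cfc_const .., hg.star_eq]
    _ ≤ star (cfc f a) * c * cfc f a :=
        star_left_conjugate_le_conjugate (sub_algebraMap_norm_sub_le ha hc) _

lemma exists_cfc_cut_eq_star_mul_cfc_cut_mul {a b r : W} (ha : IsSelfAdjoint a) {ε δ δ' : ℝ}
    (hδ' : δ' < δ) (h : ‖a - star r * cfc (fun t => max (t - δ) 0) b * r‖ < ε) :
    ∃ k v, v ∈ closure (range (cfc (fun t => √(max (t - δ) 0)) b * ·)) ∧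
      cfc (fun t => max (t - ε) 0) a
        = star (k * v) * cfc (fun t => max (t - δ') 0) b * (k * v) := by
  set s := cfc (fun t => √(max (t - δ) 0)) b
  obtain ⟨g, hg⟩ := exists_cfc_cut_le_star_mul_mul_of_norm_sub_lt ha
    ((cfc_predicate _ b : IsSelfAdjoint _).conjugate' r) h
  have hg' : cfc (fun t => max (t - ε) 0) a ≤ star (s * (r * g)) * (s * (r * g)) := by
    rw [← star_cfc_sqrt_cut_mul_self b δ] at hg
    simpa only [star_mul, mul_assoc] using hg
  obtain ⟨v, hv, hvv⟩ := exists_mem_closure_range_mul_star_mul_self_eq (cfc_nonneg fun t _ =>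
    le_max_right _ _) hg'
  have hv' : v ∈ closure (range (s * ·)) :=
    closure_mono (range_subset_iff.2 fun y =>
      mem_range.2 ⟨r * g * y, by simp only [mul_assoc]⟩) hv
  obtain ⟨k, hk⟩ := exists_cfc_sqrt_cut_mul_mul_eq b hδ'
  refine ⟨k, v, hv', ?_⟩
  rw [← hvv, ← star_cfc_sqrt_cut_mul_self]
  nth_rewrite 1 [← mul_eq_self_of_mem_closure_range_mul hk hv']
  nth_rewrite 2 [← mul_eq_self_of_mem_closure_range_mul hk hv']
  simp only [star_mul, mul_assoc]

end Unital

section NonUnital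

variable {A : Type*} [NonUnitalCStarAlgebra A] [PartialOrder A] [StarOrderedRing A]

lemma Unitization.inr_cutDown (a : A) {ε : ℝ} (hε : 0 ≤ ε) :
    ((cutDown a ε : A) : Unitization ℂ A) = cfc (fun t => max (t - ε) 0) (a : Unitization ℂ A) :=
  Unitization.real_cfcₙ_eq_cfc_inr a _ (by simp [hε])

lemma norm_sub_cutDown_le {b : A} (hb : 0 ≤ b) {δ : ℝ} (hδ : 0 ≤ δ) :
    ‖b - cutDown b δ‖ ≤ δ := by
  rw [cutDown]
  nth_rewrite 1 [← cfcₙ_id' ℝ b]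
  rw [← cfcₙ_sub ..]
  refine norm_cfcₙ_le fun t ht => ?_
  have ht₀ := quasispectrum_nonneg_of_nonneg b hb t ht
  rw [Real.norm_eq_abs, abs_le]
  constructor <;> cases max_cases (t - δ) 0 <;> linarith

lemma exists_norm_sub_star_mul_cutDown_mul_lt {a b : A} (hb : 0 ≤ b)
    (hsub : ∃ r : ℕ → A, Tendsto (fun n => star (r n) * b * r n) atTop (𝓝 a)) {ε : ℝ}
    (hε : 0 < ε) : ∃ δ > 0, ∃ r : A, ‖a - star r * cutDown b δ * r‖ < ε := by
  obtain ⟨r, hr⟩ := hsub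
  obtain ⟨n, hn⟩ := Metric.tendsto_atTop.1 hr (ε / 2) (half_pos hε)
  set δ := ε / (2 * (‖r n‖ ^ 2 + 1))
  have hδ : 0 < δ := by positivity
  have hδr : ‖r n‖ ^ 2 * δ < ε / 2 := by
    have : (‖r n‖ ^ 2 + 1) * δ = ε / 2 := by simp only [δ]; field_simp
    nlinarith
  refine ⟨δ, hδ, r n, ?_⟩
  calc ‖a - star (r n) * cutDown b δ * r n‖
      = ‖(a - star (r n) * b * r n) + star (r n) * (b - cutDown b δ) * r n‖ := by
        congr 1; noncomm_ring
    _ ≤ ‖a - star (r n) * b * r n‖ + ‖r n‖ * δ * ‖r n‖ := by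
        grw [norm_add_le, norm_mul₃_le, norm_star, norm_sub_cutDown_le hb hδ.le]
    _ < ε := by
        have := hn n le_rfl
        rw [dist_eq_norm, norm_sub_rev] at this
        linarith

lemma exists_cutDown_eq_star_mul_cutDown_mul {a b r : A} (ha : IsSelfAdjoint a) {ε δ δ' : ℝ}
    (hδ'₀ : 0 ≤ δ') (hδ' : δ' < δ) (h : ‖a - star r * cutDown b δ * r‖ < ε) :
    ∃ x : A, cutDown a ε = star x * cutDown b δ' * x := by
  have hε : 0 ≤ ε := (norm_nonneg _).trans h.le
  have hδ : 0 ≤ δ := hδ'₀.trans hδ'.le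
  have hW : ‖(a : Unitization ℂ A) - star (r : Unitization ℂ A)
      * cfc (fun t => max (t - δ) 0) (b : Unitization ℂ A) * r‖ < ε := by
    rwa [← Unitization.inr_cutDown b hδ, ← Unitization.inr_star, ← Unitization.inr_mul,
      ← Unitization.inr_mul, ← Unitization.inr_sub, Unitization.norm_inr]
  obtain ⟨k, v, hv, hkv⟩ := exists_cfc_cut_eq_star_mul_cfc_cut_mul (ha.inr (R := ℂ)) hδ' hW
  have hs : (cfc (fun t => √(max (t - δ) 0)) (b : Unitization ℂ A)).fst = 0 := by
    rw [← Unitization.real_cfcₙ_eq_cfc_inr b _ (by simp [hδ]), Unitization.fst_inr]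
  have hkv₀ : ((k * v).snd : Unitization ℂ A) = k * v := by
    refine Unitization.ext ?_ rfl
    rw [Unitization.fst_inr, Unitization.fst_mul,
      Unitization.fst_eq_zero_of_mem_closure_range_mul hs hv, mul_zero]
  refine ⟨(k * v).snd, Unitization.inr_injective (R := ℂ) ?_⟩
  rw [Unitization.inr_mul, Unitization.inr_mul, Unitization.inr_star, hkv₀,
    Unitization.inr_cutDown a hε, Unitization.inr_cutDown b hδ'₀, hkv]

end NonUnital

theorem rordam_lemma {A : Type*} [NonUnitalCStarAlgebra A] [PartialOrder A]
    [StarOrderedRing A] (a b : A) (ha : 0 ≤ a) (hb : 0 ≤ b)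
    (hsub : ∃ r : ℕ → A, Tendsto (fun n => star (r n) * b * r n) atTop (nhds a)) :
    ∀ ε : ℝ, 0 < ε → ∃ δ : ℝ, 0 < δ ∧ ∃ x : A,
      cutDown a ε = star x * cutDown b δ * x := by
  intro ε hε
  obtain ⟨δ, hδ, r, hr⟩ := exists_norm_sub_star_mul_cutDown_mul_lt hb hsub hε
  exact ⟨δ / 2, half_pos hδ,
    exists_cutDown_eq_star_mul_cutDown_mul ha.isSelfAdjoint (half_pos hδ).le (half_lt_self hδ) hr⟩
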